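/- arXiv:gr-qc/9603033 — 4 statements merged into one kernel-verified Lean document; each statement's English description precedes it below -/
import Mathlib

section
/- If a : [0,∞) → ℝ is positive, twice differentiable, satisfies a'' + (4π/3)a^{-2} = 0, a(0) = 1, a'(0) > 0, and the energy E := (1/2)a'(0)² - 4π/3 is positive, then there exist constants 0 < c₁ < c₂ such that c₁ ≤ a'(t) ≤ c₂ for all t ≥ 0. -/
open Real Set

/-!
Along a solution of `a'' = -k a⁻²` the energy `E = a'²/2 - k/a` is conserved, so for `k > 0`
and `a > 0` we get `a'² > 2E > 0`. Hence `a'` never vanishes, stays positive by the intermediate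
value theorem, and is therefore bounded below by `√(2E)`. Since `a'' ≤ 0`, `a'` is antitone and
bounded above by `a'(0)`.
-/

noncomputable def energy (k : ℝ) (a : ℝ → ℝ) (t : ℝ) : ℝ :=
  1 / 2 * deriv a t ^ 2 - k * (a t)⁻¹

theorem hasDerivAt_energy {k : ℝ} {a : ℝ → ℝ} {t : ℝ} (ha : DifferentiableAt ℝ a t)
    (ha' : DifferentiableAt ℝ (deriv a) t) (hat : a t ≠ 0) :
    HasDerivAt (energy k a) (deriv a t * (deriv (deriv a) t + k * (a t ^ 2)⁻¹)) t := by
  refine (((ha'.hasDerivAt.fun_pow 2).const_mul (1 / 2)).sub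
    ((ha.hasDerivAt.inv hat).const_mul k)).congr_deriv ?_
  field_simp
  ring

theorem two_mul_energy_lt_sq_deriv {k : ℝ} {a : ℝ → ℝ} {t : ℝ} (hk : 0 < k) (hat : 0 < a t) :
    2 * energy k a t < deriv a t ^ 2 := by
  have : 0 < k * (a t)⁻¹ := by positivity
  unfold energy
  linarith

theorem pos_of_continuousOn_Ici {f : ℝ → ℝ} {x₀ : ℝ} (hf : ContinuousOn f (Ici x₀))
    (h₀ : 0 < f x₀) (hne : ∀ t ≥ x₀, f t ≠ 0) {t : ℝ} (ht : x₀ ≤ t) : 0 < f t := by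
  by_contra! hft
  obtain ⟨c, hc, hfc⟩ :=
    intermediate_value_Icc' ht (hf.mono Icc_subset_Ici_self) ⟨hft, h₀.le⟩
  exact hne c hc.1 hfc

section ScaleFactor

variable {k : ℝ} {a : ℝ → ℝ}

theorem energy_eq_energy_zero (hne : ∀ t ≥ 0, a t ≠ 0)
    (hd1 : ∀ t ≥ 0, DifferentiableAt ℝ a t) (hd2 : ∀ t ≥ 0, DifferentiableAt ℝ (deriv a) t)
    (hode : ∀ t ≥ 0, deriv (deriv a) t + k * (a t ^ 2)⁻¹ = 0) {t : ℝ} (ht : 0 ≤ t) :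
    energy k a t = energy k a 0 := by
  have hF : ∀ x ≥ 0, HasDerivAt (energy k a) 0 x := fun x hx => by
    simpa [hode x hx] using hasDerivAt_energy (k := k) (hd1 x hx) (hd2 x hx) (hne x hx)
  exact constant_of_has_deriv_right_zero
    (fun x hx => (hF x hx.1).continuousAt.continuousWithinAt)
    (fun x hx => (hF x hx.1).hasDerivWithinAt) t ⟨ht, le_rfl⟩

theorem antitoneOn_deriv_of_ode (hk : 0 ≤ k) (hd2 : ∀ t ≥ 0, DifferentiableAt ℝ (deriv a) t)
    (hode : ∀ t ≥ 0, deriv (deriv a) t + k * (a t ^ 2)⁻¹ = 0) :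
    AntitoneOn (deriv a) (Ici 0) := by
  apply antitoneOn_of_deriv_nonpos (convex_Ici 0)
    (fun x hx => (hd2 x hx).continuousAt.continuousWithinAt)
  all_goals rw [interior_Ici]; intro x hx
  · exact (hd2 x hx.le).differentiableWithinAt
  · have : 0 ≤ k * (a x ^ 2)⁻¹ := by positivity
    linarith [hode x hx.le]

end ScaleFactor

/-- If `a` is positive, twice differentiable on `[0,∞)`, satisfies
`a'' + (4π/3) a⁻² = 0`, `a 0 = 1`, `a' 0 > 0`, and the energy
`E = (1/2) a'(0)² - 4π/3` is positive, then `a'` is bounded between two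
positive constants. -/
theorem stmt0 (a : ℝ → ℝ)
    (hpos : ∀ t ≥ 0, 0 < a t)
    (hd1 : ∀ t ≥ 0, DifferentiableAt ℝ a t)
    (hd2 : ∀ t ≥ 0, DifferentiableAt ℝ (deriv a) t)
    (hode : ∀ t ≥ 0, deriv (deriv a) t + (4 * Real.pi / 3) * ((a t) ^ 2)⁻¹ = 0)
    (ha0 : a 0 = 1)
    (ha0' : 0 < deriv a 0)
    (hE : 0 < (1 / 2) * (deriv a 0) ^ 2 - 4 * Real.pi / 3) :
    ∃ c₁ c₂ : ℝ, 0 < c₁ ∧ c₁ < c₂ ∧ ∀ t ≥ 0, c₁ ≤ deriv a t ∧ deriv a t ≤ c₂ := by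
  have hk : 0 < 4 * π / 3 := by positivity
  set E := energy (4 * π / 3) a 0 with hE_def
  have hE : 0 < E := by simpa [E, energy, ha0] using hE
  have hsq : ∀ t ≥ 0, 2 * E < deriv a t ^ 2 := fun t ht => by
    rw [hE_def, ← energy_eq_energy_zero (fun t ht => (hpos t ht).ne') hd1 hd2 hode ht]
    exact two_mul_energy_lt_sq_deriv hk (hpos t ht)
  have hderiv_pos : ∀ t ≥ 0, 0 < deriv a t := fun t =>
    pos_of_continuousOn_Ici (fun x hx => (hd2 x hx).continuousAt.continuousWithinAt) ha0'
      fun x hx hx0 => by nlinarith [hsq x hx]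
  have hlow : ∀ t ≥ 0, √(2 * E) < deriv a t := fun t ht =>
    (sqrt_lt' (hderiv_pos t ht)).2 (hsq t ht)
  refine ⟨√(2 * E), deriv a 0, by positivity, hlow 0 le_rfl, fun t ht => ⟨(hlow t ht).le, ?_⟩⟩
  exact antitoneOn_deriv_of_ode hk.le hd2 hode self_mem_Ici ht ht
end

section
/- Let H : ℝ → ℝ be C¹ with compact support and ∫_{ℝ³} H(|v|²) dv = 1, and let a : [0,∞) → ℝ be a positive C² solution of a'' + (4π/3)a^{-2} = 0. Then the function f₀(t,x,v) := H(a(t)² |v - (a'(t)/a(t)) x|²) satisfies the Vlasov equation ∂_t f₀ + v·∂_x f₀ - ∂_x U₀ · ∂_v f₀ = 0, where U₀(t,x) = (2π/3) a(t)^{-3} |x|². -/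
/-!
Write `c = a'/a` and `w = v - c x`. Along the characteristics `ẋ = v`, `v̇ = -k x` of the Vlasov
operator with linear force `k x`, the quantity `A |w|²` is conserved as soon as `A' = 2 c A` and
`c' + c² + k = 0`: indeed `ẇ = -c w`. For `A = a²` and `k = (4π/3) a⁻³` the first condition is
automatic and the second is exactly the Friedmann equation `a'' + (4π/3) a⁻² = 0`. Since the
Vlasov operator is a first-order differential operator, it then also annihilates `H(A |w|²)`.
-/

open Real Set MeasureTheory

noncomputable section

local notation "E3" => EuclideanSpace ℝ (Fin 3)

open scoped RealInnerProductSpace Gradient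

section Vlasov

variable {E : Type*} [NormedAddCommGroup E] [InnerProductSpace ℝ E] [CompleteSpace E]

def vlasovOperator (F : ℝ → E → E) (f : ℝ → E → E → ℝ) (t : ℝ) (x v : E) : ℝ :=
  deriv (fun s => f s x v) t + ⟪v, ∇ (fun y => f t y v) x⟫ - ⟪F t x, ∇ (fun w => f t x w) v⟫

lemma vlasovOperator_eq_fderiv (F : ℝ → E → E) (f : ℝ → E → E → ℝ) (t : ℝ) (x v : E) :
    vlasovOperator F f t x v = deriv (fun s => f s x v) t + fderiv ℝ (fun y => f t y v) x v
      - fderiv ℝ (fun w => f t x w) v (F t x) := by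
  simp only [vlasovOperator, inner_gradient_right, conj_trivial]

variable {F : ℝ → E → E} {t : ℝ} {x v : E}

theorem vlasovOperator_comp {H : ℝ → ℝ} {h' : ℝ} {g : ℝ → E → E → ℝ}
    (hH : HasDerivAt H h' (g t x v)) (ht : DifferentiableAt ℝ (fun s => g s x v) t)
    (hx : DifferentiableAt ℝ (fun y => g t y v) x) (hv : DifferentiableAt ℝ (g t x) v) :
    vlasovOperator F (fun s y u => H (g s y u)) t x v = h' * vlasovOperator F g t x v := by
  simp only [vlasovOperator_eq_fderiv]
  have htime : HasDerivAt (fun s => H (g s x v)) _ t := hH.comp t ht.hasDerivAt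
  have hpos : HasFDerivAt (fun y => H (g t y v)) _ x := hH.comp_hasFDerivAt x hx.hasFDerivAt
  have hvel : HasFDerivAt (fun w => H (g t x w)) _ v := hH.comp_hasFDerivAt v hv.hasFDerivAt
  rw [htime.deriv, hpos.fderiv, hvel.fderiv]
  simp only [smul_apply, smul_eq_mul]
  ring

theorem vlasovOperator_weighted_norm_sq_eq_zero {A c k : ℝ → ℝ}
    (hA : HasDerivAt A (2 * A t * c t) t) (hc : HasDerivAt c (-(c t ^ 2 + k t)) t) :
    vlasovOperator (fun s y => k s • y) (fun s y u => A s * ‖u - c s • y‖ ^ 2) t x v = 0 := by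
  have htime := hA.fun_mul ((hc.smul_const x).const_sub v).norm_sq
  have hpos : HasFDerivAt (fun y => A t * ‖v - c t • y‖ ^ 2) _ x :=
    (((hasFDerivAt_id x).fun_const_smul (c t)).const_sub v).norm_sq.const_mul (A t)
  have hvel : HasFDerivAt (fun w => A t * ‖w - c t • x‖ ^ 2) _ v :=
    ((hasFDerivAt_id v).sub_const (c t • x)).norm_sq.const_mul (A t)
  rw [vlasovOperator_eq_fderiv, htime.deriv, hpos.fderiv, hvel.fderiv]
  obtain ⟨w, rfl⟩ : ∃ w, v = w + c t • x := ⟨v - c t • x, (sub_add_cancel _ _).symm⟩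
  simp only [add_sub_cancel_right, id_eq, ContinuousLinearMap.comp_neg, ContinuousLinearMap.comp_id,
    ContinuousLinearMap.comp_smulₛₗ, smul_apply, neg_apply, coe_innerSL_apply, RingHom.id_apply,
    smul_eq_mul, nsmul_eq_mul, inner_neg_right, inner_add_right, inner_smul_right,
    real_inner_self_eq_norm_sq]
  ring

theorem vlasovOperator_comp_weighted_norm_sq_eq_zero {H : ℝ → ℝ} {A c k : ℝ → ℝ}
    (hH : DifferentiableAt ℝ H (A t * ‖v - c t • x‖ ^ 2))
    (hA : HasDerivAt A (2 * A t * c t) t) (hc : HasDerivAt c (-(c t ^ 2 + k t)) t) :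
    vlasovOperator (fun s y => k s • y) (fun s y u => H (A s * ‖u - c s • y‖ ^ 2)) t x v = 0 := by
  have ht : DifferentiableAt ℝ (fun s => A s * ‖v - c s • x‖ ^ 2) t :=
    hA.differentiableAt.mul (((hc.differentiableAt.smul_const x).const_sub v).norm_sq ℝ)
  have hx : DifferentiableAt ℝ (fun y => A t * ‖v - c t • y‖ ^ 2) x :=
    ((differentiableAt_id.const_smul (c t)).const_sub v).norm_sq ℝ |>.const_mul (A t)
  have hv : DifferentiableAt ℝ (fun u => A t * ‖u - c t • x‖ ^ 2) v :=
    (differentiableAt_id.sub_const (c t • x)).norm_sq ℝ |>.const_mul (A t)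
  rw [vlasovOperator_comp hH.hasDerivAt ht hx hv,
    vlasovOperator_weighted_norm_sq_eq_zero hA hc, mul_zero]

end Vlasov

theorem stmt3_general (H : ℝ → ℝ) (hH : ContDiff ℝ 1 H)
    (a : ℝ → ℝ) (hpos : ∀ t ≥ 0, 0 < a t)
    (haC2 : ContDiff ℝ 2 a)
    (hode : ∀ t ≥ 0, deriv (deriv a) t + (4 * Real.pi / 3) * ((a t) ^ 2)⁻¹ = 0)
    (f₀ : ℝ → E3 → E3 → ℝ)
    (hf₀ : ∀ t x v, f₀ t x v = H ((a t) ^ 2 * ‖v - (deriv a t / a t) • x‖ ^ 2)) :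
    ∀ t ≥ 0, ∀ x v : E3,
      deriv (fun s => f₀ s x v) t
        + (inner ℝ v (gradient (fun y => f₀ t y v) x) : ℝ)
        - (inner ℝ ((4 * Real.pi / 3 * ((a t) ^ 3)⁻¹) • x)
            (gradient (fun w => f₀ t x w) v) : ℝ) = 0 := by
  intro t ht x v
  simp only [hf₀]
  have hat : a t ≠ 0 := (hpos t ht).ne'
  have hda : HasDerivAt a (deriv a t) t := (haC2.differentiable two_ne_zero t).hasDerivAt
  have hdda : HasDerivAt (deriv a) (deriv (deriv a) t) t :=
    (haC2.differentiable_deriv_two t).hasDerivAt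
  refine vlasovOperator_comp_weighted_norm_sq_eq_zero (k := fun s => 4 * π / 3 * (a s ^ 3)⁻¹)
    (hH.differentiable one_ne_zero _) ?_ ?_
  · refine (hda.fun_pow 2).congr_deriv ?_
    field_simp
    ring
  · refine (hdda.div hda hat).congr_deriv ?_
    rw [eq_neg_of_add_eq_zero_left (hode t ht)]
    field_simp
    ring

/-- The homogeneous distribution `f₀(t,x,v) = H(a(t)² |v - (a'(t)/a(t)) x|²)`
satisfies the Vlasov equation `∂_t f₀ + v·∂_x f₀ - ∂_x U₀ · ∂_v f₀ = 0`, where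
`U₀(t,x) = (2π/3) a(t)⁻³ |x|²`, i.e. `∂_x U₀(t,x) = (4π/3) a(t)⁻³ x`. -/
theorem stmt3 (H : ℝ → ℝ) (hH : ContDiff ℝ 1 H) (hsupp : HasCompactSupport H)
    (hnorm : ∫ v : E3, H (‖v‖ ^ 2) = 1)
    (a : ℝ → ℝ) (hpos : ∀ t ≥ 0, 0 < a t)
    (haC2 : ContDiff ℝ 2 a)
    (hode : ∀ t ≥ 0, deriv (deriv a) t + (4 * Real.pi / 3) * ((a t) ^ 2)⁻¹ = 0)
    (f₀ : ℝ → E3 → E3 → ℝ)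
    (hf₀ : ∀ t x v, f₀ t x v = H ((a t) ^ 2 * ‖v - (deriv a t / a t) • x‖ ^ 2)) :
    ∀ t ≥ 0, ∀ x v : E3,
      deriv (fun s => f₀ s x v) t
        + (inner ℝ v (gradient (fun y => f₀ t y v) x) : ℝ)
        - (inner ℝ ((4 * Real.pi / 3 * ((a t) ^ 3)⁻¹) • x)
            (gradient (fun w => f₀ t x w) v) : ℝ) = 0 :=
  stmt3_general H hH a hpos haC2 hode f₀ hf₀

end
end

section
/- Suppose |∂_x X(s,t,x,v)| ≤ C (a(t)/a(s)) for 0 ≤ s ≤ t ≤ T and ‖∂²_x W(τ)‖_∞ ≤ γ a(τ)^{-δ} with γ ∈ (0,1], δ > 0, and a(τ) ≥ 1 + c₁τ, c₁ > 0. If |∂_x V(s,t,x,v)| ≤ a(s)^{-1} ∫_s^t ‖∂²_x W(τ)‖_∞ |∂_x X(τ,t,x,v)| dτ, then |∂_x V(s,t,x,v)| ≤ C' γ a(t)/a(s) for a constant C' depending only on C, c₁, δ. -/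
open Real Set MeasureTheory

/-!
Bounding `a τ` below by `1 + c₁ τ`, the integrand `w τ * p τ` is at most
`γ C a(t) (1 + c₁ τ)^(-(1 + δ))`, whose integral over `[0, ∞)` is `1 / (c₁ δ)`.
Hence `C' = C / (c₁ δ)` works.
-/

lemma mul_le_rpow_neg_one_add_of_le_rpow_neg_of_le_div {w p γ C A x b δ : ℝ} (hb : 0 < b)
    (hbx : b ≤ x) (hγ : 0 ≤ γ) (hCA : 0 ≤ C * A) (hδ : -1 ≤ δ) (hw₀ : 0 ≤ w)
    (hw : w ≤ γ * x ^ (-δ)) (hp₀ : 0 ≤ p) (hp : p ≤ C * A / x) :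
    w * p ≤ γ * C * A * b ^ (-(1 + δ)) := by
  have hx : 0 < x := hb.trans_le hbx
  calc w * p ≤ γ * x ^ (-δ) * (C * A / x) :=
        mul_le_mul hw hp hp₀ (hw₀.trans hw)
    _ = γ * C * A * x ^ (-(1 + δ)) := by
        rw [neg_add, rpow_add hx, rpow_neg_one]; ring
    _ ≤ γ * C * A * b ^ (-(1 + δ)) := by
        refine mul_le_mul_of_nonneg_left (rpow_le_rpow_of_nonpos hb hbx (by linarith)) ?_
        rw [mul_assoc]; exact mul_nonneg hγ hCA

lemma intervalIntegrable_one_add_mul_rpow {c r s t : ℝ} (hc : 0 ≤ c) (hs : 0 ≤ s)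
    (hst : s ≤ t) :
    IntervalIntegrable (fun τ => (1 + c * τ) ^ r) volume s t := by
  refine ContinuousOn.intervalIntegrable_of_Icc hst ?_
  refine ContinuousOn.rpow_const (by fun_prop) fun τ hτ => Or.inl ?_
  have : 0 ≤ c * τ := mul_nonneg hc (hs.trans hτ.1)
  positivity

lemma integral_one_add_mul_rpow_neg_le {c δ s t : ℝ} (hc : 0 < c) (hδ : 0 < δ) (hs : 0 ≤ s)
    (hst : s ≤ t) :
    ∫ τ in s..t, (1 + c * τ) ^ (-(1 + δ)) ≤ 1 / (c * δ) := by
  have hcs : 1 ≤ 1 + c * s := by nlinarith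
  have hct : 1 ≤ 1 + c * t := by nlinarith
  have h0 : (0 : ℝ) ∉ uIcc (1 + c * s) (1 + c * t) := by
    rw [uIcc_of_le (by nlinarith)]; intro h; linarith [h.1]
  rw [intervalIntegral.integral_comp_add_mul (fun x => x ^ (-(1 + δ))) hc.ne',
    integral_rpow (Or.inr ⟨by linarith, h0⟩), show -(1 + δ) + 1 = -δ by ring, smul_eq_mul]
  have ht : 0 ≤ (1 + c * t) ^ (-δ) := by positivity
  have hs' : (1 + c * s) ^ (-δ) ≤ 1 := rpow_le_one_of_one_le_of_nonpos hcs (by linarith)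
  rw [div_neg, ← neg_div, neg_sub, inv_mul_eq_div, div_div, mul_comm δ c]
  exact div_le_div_of_nonneg_right (by linarith) (by positivity)

lemma integral_le_of_le_mul_one_add_mul_rpow_neg {f : ℝ → ℝ} {K c δ s t : ℝ} (hK : 0 ≤ K)
    (hc : 0 < c) (hδ : 0 < δ) (hs : 0 ≤ s) (hst : s ≤ t) (hf : IntervalIntegrable f volume s t)
    (hfle : ∀ τ ∈ Icc s t, f τ ≤ K * (1 + c * τ) ^ (-(1 + δ))) :
    ∫ τ in s..t, f τ ≤ K * (1 / (c * δ)) :=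
  calc ∫ τ in s..t, f τ
      ≤ ∫ τ in s..t, K * (1 + c * τ) ^ (-(1 + δ)) :=
        intervalIntegral.integral_mono_on hst hf
          ((intervalIntegrable_one_add_mul_rpow hc.le hs hst).const_mul _) hfle
    _ = K * ∫ τ in s..t, (1 + c * τ) ^ (-(1 + δ)) := intervalIntegral.integral_const_mul _ _
    _ ≤ K * (1 / (c * δ)) :=
        mul_le_mul_of_nonneg_left (integral_one_add_mul_rpow_neg_le hc hδ hs hst) hK

/-- Derivative estimate for the velocity characteristics under the free streaming
condition: if `|∂_x X(s)| ≤ C a(t)/a(s)` (here `p`), `‖∂²_x W(τ)‖ ≤ γ a(τ)^(-δ)`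
(here `w`), and `|∂_x V(s)| ≤ a(s)⁻¹ ∫_s^t w(τ) p(τ) dτ` (here `q`), then
`q s ≤ C' γ a(t)/a(s)` with `C'` depending only on `C, c₁, δ`. -/
theorem stmt9 (C c₁ δ : ℝ) (hC : 0 < C) (hc₁ : 0 < c₁) (hδ : 0 < δ) :
    ∃ C' : ℝ, 0 < C' ∧
      ∀ (a w : ℝ → ℝ) (γ T : ℝ), 0 < γ → γ ≤ 1 →
        Continuous a → (∀ τ ≥ 0, 1 + c₁ * τ ≤ a τ) →
        ContinuousOn w (Icc 0 T) →
        (∀ τ ∈ Icc 0 T, 0 ≤ w τ ∧ w τ ≤ γ * (a τ) ^ (-δ)) →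
        ∀ t ∈ Icc 0 T, ∀ p q : ℝ → ℝ,
          ContinuousOn p (Icc 0 t) →
          (∀ s ∈ Icc 0 t, 0 ≤ p s ∧ p s ≤ C * a t / a s) →
          (∀ s ∈ Icc 0 t, q s ≤ (a s)⁻¹ * ∫ τ in s..t, w τ * p τ) →
          ∀ s ∈ Icc 0 t, q s ≤ C' * γ * a t / a s := by
  refine ⟨C / (c₁ * δ), by positivity, ?_⟩
  intro a w γ T hγ _ _ ha hw hwb t ⟨ht₀, htT⟩ p q hp hpb hqb s ⟨hs₀, hst⟩
  have ha_pos : ∀ τ, 0 ≤ τ → 0 < a τ := fun τ hτ =>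
    (by positivity : 0 < 1 + c₁ * τ).trans_le (ha τ hτ)
  have hwp : ∀ τ ∈ Icc s t, w τ * p τ ≤ γ * C * a t * (1 + c₁ * τ) ^ (-(1 + δ)) := by
    intro τ ⟨hsτ, hτt⟩
    have hτ₀ := hs₀.trans hsτ
    obtain ⟨hw₀, hw_le⟩ := hwb τ ⟨hτ₀, hτt.trans htT⟩
    obtain ⟨hp₀, hp_le⟩ := hpb τ ⟨hτ₀, hτt⟩
    exact mul_le_rpow_neg_one_add_of_le_rpow_neg_of_le_div (by positivity) (ha τ hτ₀) hγ.le
      (mul_nonneg hC.le (ha_pos t ht₀).le) (by linarith) hw₀ hw_le hp₀ hp_le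
  have hint : ∫ τ in s..t, w τ * p τ ≤ γ * C * a t * (1 / (c₁ * δ)) :=
    integral_le_of_le_mul_one_add_mul_rpow_neg (by have := ha_pos t ht₀; positivity) hc₁ hδ hs₀
      hst (ContinuousOn.intervalIntegrable_of_Icc hst
        ((hw.mono (Icc_subset_Icc hs₀ htT)).mul (hp.mono (Icc_subset_Icc hs₀ le_rfl)))) hwp
  have := ha_pos s hs₀
  calc q s ≤ (a s)⁻¹ * ∫ τ in s..t, w τ * p τ := hqb s ⟨hs₀, hst⟩
    _ ≤ (a s)⁻¹ * (γ * C * a t * (1 / (c₁ * δ))) := by gcongr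
    _ = C / (c₁ * δ) * γ * a t / a s := by field_simp
end

section
/- Define ln*(s) = s for s ≤ 1 and ln*(s) = 1 + ln s for s > 1. If u : [0,T] → [0,∞) is continuous and satisfies u(t) ≤ C(t) + C(t) ln*(C(t) exp(∫₀^t u(τ) dτ)) with C continuous, nondecreasing, C(t) ≥ 1, then u(t) ≤ D(t) for a continuous function D depending only on C (in particular, u is bounded on [0,T] independently of the particular solution). -/
/-!
The bound is linear in `∫₀^t u` once the logarithm is unfolded: for `C ≥ 1` and `I ≥ 0`,
`C + C ln*(C e^I) = C (2 + log C) + C I`. By monotonicity of `C`, on `[0, t]` this gives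
`u ≤ A + K ∫₀ u` with the constants `A = C(t)(2 + log C(t))` and `K = C(t)`, and the linear
Gronwall inequality yields `u(t) ≤ A e^{K t}`.
-/

open Real Set MeasureTheory

noncomputable section

/-- `ln*(s) = s` for `s ≤ 1` and `ln*(s) = 1 + ln s` for `s > 1`. -/
def lnStar (s : ℝ) : ℝ := if s ≤ 1 then s else 1 + Real.log s

lemma lnStar_of_one_le {s : ℝ} (hs : 1 ≤ s) : lnStar s = 1 + log s := by
  rcases hs.eq_or_lt with rfl | hs
  · simp [lnStar]
  · simp [lnStar, not_le.mpr hs]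

lemma add_mul_lnStar_mul_exp_le {c c' I : ℝ} (hc : 1 ≤ c) (hcc' : c ≤ c') (hI : 0 ≤ I) :
    c + c * lnStar (c * exp I) ≤ c' * (2 + log c') + c' * I := by
  have hc0 : 0 < c := by linarith
  have hlog : 0 ≤ log c := log_nonneg hc
  rw [lnStar_of_one_le (one_le_mul_of_one_le_of_one_le hc (one_le_exp hI)),
    log_mul hc0.ne' (exp_ne_zero I), log_exp]
  calc c + c * (1 + (log c + I)) = c * (2 + log c) + c * I := by ring
    _ ≤ c' * (2 + log c') + c' * I := by gcongr; linarith

lemma mul_gronwallBound_zero (K ε x : ℝ) :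
    K * gronwallBound 0 K ε x = ε * (exp (K * x) - 1) := by
  rcases eq_or_ne K 0 with rfl | hK
  · simp
  · rw [gronwallBound_of_K_ne_0 hK]
    field_simp
    ring

open Topology in
lemma hasDerivWithinAt_integral_Ici {u : ℝ → ℝ} {a b x : ℝ} (hu : ContinuousOn u (Icc a b))
    (hx : x ∈ Ico a b) : HasDerivWithinAt (fun y => ∫ τ in a..y, u τ) (u x) (Ici x) x := by
  have hnhds : Icc a b ∈ 𝓝[>] x := Icc_mem_nhdsGT_of_mem hx
  exact intervalIntegral.integral_hasDerivWithinAt_right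
    ((hu.mono (Icc_subset_Icc_right hx.2.le)).intervalIntegrable_of_Icc hx.1)
    ⟨Icc a b, hnhds, hu.aestronglyMeasurable measurableSet_Icc⟩
    ((hu x (Ico_subset_Icc_self hx)).mono_of_mem_nhdsWithin hnhds)

theorem le_mul_exp_of_le_add_mul_integral {u : ℝ → ℝ} {A K a b : ℝ} (hK : 0 ≤ K)
    (hu : ContinuousOn u (Icc a b)) (h : ∀ x ∈ Icc a b, u x ≤ A + K * ∫ τ in a..x, u τ) :
    ∀ x ∈ Icc a b, u x ≤ A * exp (K * (x - a)) := by
  intro x hx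
  have hab : a ≤ b := hx.1.trans hx.2
  have hF : ContinuousOn (fun y => ∫ τ in a..y, u τ) (Icc a b) := by
    simpa [uIcc_of_le hab] using
      intervalIntegral.continuousOn_primitive_interval (μ := volume) (a := a) (b := b)
        (by simpa [uIcc_of_le hab] using hu.integrableOn_Icc)
  have hgron := le_gronwallBound_of_liminf_deriv_right_le (δ := 0) (K := K) (ε := A) hF
    (fun y hy _ hr => (hasDerivWithinAt_integral_Ici hu hy).liminf_right_slope_le hr)
    (by simp) (fun y hy => by linarith [h y (Ico_subset_Icc_self hy)]) x hx
  calc u x ≤ A + K * ∫ τ in a..x, u τ := h x hx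
    _ ≤ A + K * gronwallBound 0 K A (x - a) := by gcongr
    _ = A * exp (K * (x - a)) := by rw [mul_gronwallBound_zero]; ring

theorem stmt15_general (T : ℝ) (C : ℝ → ℝ)
    (hCc : ContinuousOn C (Icc 0 T)) (hCmono : MonotoneOn C (Icc 0 T))
    (hC1 : ∀ t ∈ Icc 0 T, 1 ≤ C t) :
    ∃ D : ℝ → ℝ, ContinuousOn D (Icc 0 T) ∧
      ∀ u : ℝ → ℝ, ContinuousOn u (Icc 0 T) → (∀ t ∈ Icc 0 T, 0 ≤ u t) →
        (∀ t ∈ Icc 0 T,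
          u t ≤ C t + C t * lnStar (C t * Real.exp (∫ τ in (0 : ℝ)..t, u τ))) →
        ∀ t ∈ Icc 0 T, u t ≤ D t := by
  refine ⟨fun t => C t * (2 + log (C t)) * exp (C t * t),
    (hCc.mul (continuousOn_const.add (hCc.log fun t ht => by linarith [hC1 t ht]))).mul
      (hCc.mul continuousOn_id).rexp, ?_⟩
  intro u hu hu0 hineq t ht
  have hsub : Icc 0 t ⊆ Icc 0 T := Icc_subset_Icc_right ht.2
  have hlin : ∀ s ∈ Icc 0 t, u s ≤ C t * (2 + log (C t)) + C t * ∫ τ in (0 : ℝ)..s, u τ :=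
    fun s hs => (hineq s (hsub hs)).trans <| add_mul_lnStar_mul_exp_le (hC1 s (hsub hs))
      (hCmono (hsub hs) ht hs.2)
      (intervalIntegral.integral_nonneg hs.1 fun τ hτ => hu0 τ (hsub ⟨hτ.1, hτ.2.trans hs.2⟩))
  simpa using le_mul_exp_of_le_add_mul_integral (by linarith [hC1 t ht]) (hu.mono hsub) hlin t
    ⟨ht.1, le_rfl⟩

/-- Log-Gronwall: if a continuous nonnegative `u` on `[0,T]` satisfies
`u t ≤ C t + C t · ln*(C t · exp(∫₀^t u))` with `C` continuous, nondecreasing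
and `≥ 1`, then `u` is bounded by a continuous function `D` depending only
on `C` (and `T`), not on the particular `u`. -/
theorem stmt15 (T : ℝ) (hT : 0 ≤ T) (C : ℝ → ℝ)
    (hCc : ContinuousOn C (Icc 0 T)) (hCmono : MonotoneOn C (Icc 0 T))
    (hC1 : ∀ t ∈ Icc 0 T, 1 ≤ C t) :
    ∃ D : ℝ → ℝ, ContinuousOn D (Icc 0 T) ∧
      ∀ u : ℝ → ℝ, ContinuousOn u (Icc 0 T) → (∀ t ∈ Icc 0 T, 0 ≤ u t) →
        (∀ t ∈ Icc 0 T,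
          u t ≤ C t + C t * lnStar (C t * Real.exp (∫ τ in (0 : ℝ)..t, u τ))) →
        ∀ t ∈ Icc 0 T, u t ≤ D t :=
  stmt15_general T C hCc hCmono hC1

end
end
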